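/- arXiv:nlin/0304024 — 2 statements merged into one kernel-verified Lean document; each statement's English description precedes it below -/
import Mathlib

section
/- Suppose f₀, f₁, f₂, g, q, r, u₀, u₁, u₂ are differentiable functions of x and ε₁, ε₂, ε₃ are functions of x satisfying the system: ε₁' = ε₂' = ε₃' = 0; f₀' = f₀(u₂-u₀) - (ε₃-ε₁-4); f₁' = f₁(u₀-u₁) - r(ε₁-ε₂); f₂' = f₂(u₁-u₂) - q(ε₂-ε₃); 3q' = 3q(u₁-u₀) + qf₀ - f₂; 3r' = 3r(u₂-u₁) - rf₀ + f₁; g' = g(u₀-u₂) - qf₁ + rf₂ - ε₁ + ε₃; and the algebraic relation g = f₀ + 3qr. Then g' = 2, so g = 2x + c for a constant c. -/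
theorem stmt_4 (f0 f1 f2 g q r u0 u1 u2 ε1 ε2 ε3 : ℝ → ℂ)
    (hε1 : ∀ x, HasDerivAt ε1 0 x) (hε2 : ∀ x, HasDerivAt ε2 0 x)
    (hε3 : ∀ x, HasDerivAt ε3 0 x)
    (hf0 : ∀ x, HasDerivAt f0 (f0 x * (u2 x - u0 x) - (ε3 x - ε1 x - 4)) x)
    (hf1 : ∀ x, HasDerivAt f1 (f1 x * (u0 x - u1 x) - r x * (ε1 x - ε2 x)) x)
    (hf2 : ∀ x, HasDerivAt f2 (f2 x * (u1 x - u2 x) - q x * (ε2 x - ε3 x)) x)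
    (hq : ∀ x, HasDerivAt q ((3 * q x * (u1 x - u0 x) + q x * f0 x - f2 x) / 3) x)
    (hr : ∀ x, HasDerivAt r ((3 * r x * (u2 x - u1 x) - r x * f0 x + f1 x) / 3) x)
    (hg : ∀ x, HasDerivAt g
      (g x * (u0 x - u2 x) - q x * f1 x + r x * f2 x - ε1 x + ε3 x) x)
    (halg : ∀ x, g x = f0 x + 3 * q x * r x) :
    (∀ x, HasDerivAt g 2 x) ∧ ∃ c : ℂ, ∀ x : ℝ, g x = 2 * x + c := by
  have key : ∀ x, HasDerivAt g 2 x := by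
    intro x
    have h2 : HasDerivAt g
        (f0 x * (u2 x - u0 x) - (ε3 x - ε1 x - 4) +
          3 * (((3 * q x * (u1 x - u0 x) + q x * f0 x - f2 x) / 3) * r x +
            q x * ((3 * r x * (u2 x - u1 x) - r x * f0 x + f1 x) / 3))) x := by
      have : HasDerivAt (fun x => f0 x + 3 * (q x * r x))
          (f0 x * (u2 x - u0 x) - (ε3 x - ε1 x - 4) +
            3 * (((3 * q x * (u1 x - u0 x) + q x * f0 x - f2 x) / 3) * r x +
              q x * ((3 * r x * (u2 x - u1 x) - r x * f0 x + f1 x) / 3))) x :=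
        (hf0 x).add (HasDerivAt.const_mul 3 ((hq x).mul (hr x)))
      have hfun : g = fun x => f0 x + 3 * (q x * r x) := by
        funext y; rw [halg y]; ring
      rw [hfun]; exact this
    have huniq := (hg x).unique h2
    have hgx := halg x
    have : (g x * (u0 x - u2 x) - q x * f1 x + r x * f2 x - ε1 x + ε3 x) = 2 := by
      have : 2 * (g x * (u0 x - u2 x) - q x * f1 x + r x * f2 x - ε1 x + ε3 x) = 4 := by
        rw [hgx] at huniq ⊢
        linear_combination huniq
      linear_combination this / 2
    rw [← this]; exact hg x
  refine ⟨key, g 0, fun x => ?_⟩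
  have h : ∀ y : ℝ, HasDerivAt (fun t : ℝ => g t - 2 * t) 0 y := by
    intro y
    have h2 := (((hasDerivAt_id (y:ℂ)).const_mul (2:ℂ)).comp_ofReal (z := y))
    simp only [id, mul_one] at h2
    have h3 := (key y).sub h2
    rw [sub_self] at h3
    exact h3
  have hd : Differentiable ℝ (fun t : ℝ => g t - 2 * t) := fun y => (h y).differentiableAt
  have hc := is_const_of_deriv_eq_zero hd (fun y => (h y).deriv) x 0
  simp only [Complex.ofReal_zero, mul_zero, sub_zero] at hc
  linear_combination hc
end

section
/- With s₁ as above and s₂ defined by: s₂(α₀) = α₀+α₂, s₂(α₁) = α₁+α₂, s₂(α₂) = -α₂, s₂(f₀) = f₀ + 3qα₂/f₂, s₂(f₁) = f₁ - gα₂/f₂, s₂(f₂) = f₂, s₂(g) = g, s₂(q) = q, s₂(r) = r - α₂/f₂, s₂(u₀) = u₀, s₂(u₁) = u₁ - qα₂/f₂, s₂(u₂) = u₂ + qα₂/f₂, the braid relation s₁s₂s₁ = s₂s₁s₂ holds as an identity of field automorphisms of C(α₀,α₁,α₂,f₀,f₁,f₂,g,q,r,u₀,u₁,u₂). -/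
/-- A tuple of the twelve generators α₀,α₁,α₂,f₀,f₁,f₂,g,q,r,u₀,u₁,u₂. -/
@[ext]
structure Vars (F : Type*) where
  α0 : F
  α1 : F
  α2 : F
  f0 : F
  f1 : F
  f2 : F
  g : F
  q : F
  r : F
  u0 : F
  u1 : F
  u2 : F

variable {F : Type*} [Field F]

/-- The substitution s₁ on the generators of the rational function field. -/
def s1V (v : Vars F) : Vars F where
  α0 := v.α0 + v.α1
  α1 := -v.α1
  α2 := v.α2 + v.α1
  f0 := v.f0 - 3 * v.r * v.α1 / v.f1
  f1 := v.f1
  f2 := v.f2 + v.g * v.α1 / v.f1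
  g := v.g
  q := v.q + v.α1 / v.f1
  r := v.r
  u0 := v.u0 - v.r * v.α1 / v.f1
  u1 := v.u1 + v.r * v.α1 / v.f1
  u2 := v.u2

/-- The substitution s₂ on the generators of the rational function field. -/
def s2V (v : Vars F) : Vars F where
  α0 := v.α0 + v.α2
  α1 := v.α1 + v.α2
  α2 := -v.α2
  f0 := v.f0 + 3 * v.q * v.α2 / v.f2
  f1 := v.f1 - v.g * v.α2 / v.f2
  f2 := v.f2
  g := v.g
  q := v.q
  r := v.r - v.α2 / v.f2
  u0 := v.u0
  u1 := v.u1 - v.q * v.α2 / v.f2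
  u2 := v.u2 + v.q * v.α2 / v.f2

set_option maxHeartbeats 4000000 in
/-- The braid relation s₁s₂s₁ = s₂s₁s₂ (away from the vanishing loci of the
denominators appearing in the compositions). -/
theorem stmt_8 (v : Vars F)
    (h1 : v.f1 ≠ 0) (h2 : v.f2 ≠ 0)
    (h12 : (s1V v).f2 ≠ 0) (h21 : (s2V v).f1 ≠ 0)
    (h121 : (s2V (s1V v)).f1 ≠ 0) (h212 : (s1V (s2V v)).f2 ≠ 0) :
    s1V (s2V (s1V v)) = s2V (s1V (s2V v)) := by
  obtain ⟨a0, a1, a2, f0, f1, f2, g, q, r, u0, u1, u2⟩ := v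
  simp only [s1V, s2V] at *
  field_simp at h12 h21
  have hA : f1 * f2 + a1 * g ≠ 0 := by intro h; apply h12; linear_combination h / f1
  have hB : f1 * f2 - a2 * g ≠ 0 := by intro h; apply h21; linear_combination h / f2
  have hC : f1 ^ 2 * f2 - f1 * g * a2 ≠ 0 := by
    intro h; exact mul_ne_zero h1 hB (by linear_combination h)
  have hD : f1 * f2 ^ 2 + a1 * f2 * g ≠ 0 := by
    intro h; exact mul_ne_zero h2 hA (by linear_combination h)
  have hE : f1 ^ 2 * f2 + f1 * a1 * g ≠ 0 := by
    intro h; exact mul_ne_zero h1 hA (by linear_combination h)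
  have hF : f1 * f2 ^ 2 - a2 * f2 * g ≠ 0 := by
    intro h; exact mul_ne_zero h2 hB (by linear_combination h)
  have k1 : f2 + g * a1 / f1 = (f1 * f2 + a1 * g) / f1 := by field_simp
  have k2 : f1 - g * a2 / f2 = (f1 * f2 - a2 * g) / f2 := by field_simp
  have k3 : f1 - g * (a2 + a1) / (f2 + g * a1 / f1)
      = f1 * (f1 * f2 - a2 * g) / (f1 * f2 + a1 * g) := by
    rw [k1, div_div_eq_mul_div, eq_div_iff hA, sub_mul, div_mul_cancel₀ _ hA]; ring
  have k4 : f2 + g * (a1 + a2) / (f1 - g * a2 / f2)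
      = f2 * (f1 * f2 + a1 * g) / (f1 * f2 - a2 * g) := by
    rw [k2, div_div_eq_mul_div, eq_div_iff hB, add_mul, div_mul_cancel₀ _ hB]; ring
  have hD2 : f1 * f2 ^ 2 + f2 * a1 * g ≠ 0 := by
    intro h; exact mul_ne_zero h2 hA (by linear_combination h)
  ext <;>
    first
    | ring1
    | · try simp only [k3, k4]
        try simp only [k1, k2]
        generalize hgA : f1 * f2 + a1 * g = A at hA ⊢
        generalize hgB : f1 * f2 - a2 * g = B at hB ⊢
        field_simp
        subst hgA hgB
        ring
end
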